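/- For every δ > 0 there exist ρ > 0 and ε₀ > 0 such that for all ε ∈ (0, ε₀) and all x ∈ Ω_ε with |x − x₀| ≤ ρ, one has |u_ε(x) − u₀(x) − (log|x − x₀|/|log ε|)·u₀(x₀)| ≤ δ·(|log|x − x₀||/|log ε| + 1). In other words, near the hole u_ε(x) = u₀(x) + (log|x − x₀|/|log ε|)·(u₀(x₀) + o(1)) + o(1) as ε → 0⁺ and |x − x₀| → 0. -/

import Mathlib

/-!
Everything rests on the weak maximum principle for `Δ` on bounded planar domains. Domain
monotonicity gives `uε ≤ u₀`, and the harmonic barrier `M (log R - log ‖x - x₀‖) / |log ε|`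
gives `u₀ - uε = O(1 / |log ε|)` away from the hole. The function
`w = uε - u₀ - (log ‖x - x₀‖ / |log ε|) u₀(x₀)` is harmonic on the annulus
`ε < ‖x - x₀‖ < σ`; on the inner circle `w = u₀(x₀) - u₀(x)` is small by continuity of `u₀`,
on the outer circle `w = O(1 / |log ε|)`. By the maximum principle `|w|` is small on the whole
annulus.
-/

open Real Set Metric Filter Topology

noncomputable section

abbrev E2 := EuclideanSpace ℝ (Fin 2)

/-- Second partial derivative `∂²u/∂xᵢ∂xⱼ` at `x`. -/
noncomputable def pd2 (u : E2 → ℝ) (x : E2) (i j : Fin 2) : ℝ :=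
  fderiv ℝ (fun y => fderiv ℝ u y (EuclideanSpace.single j 1)) x (EuclideanSpace.single i 1)

/-- The Hessian matrix `D²u(x)`. -/
noncomputable def Hess (u : E2 → ℝ) (x : E2) : Matrix (Fin 2) (Fin 2) ℝ :=
  Matrix.of fun i j => pd2 u x i j

/-- The Laplacian `Δu(x)`. -/
noncomputable def lap (u : E2 → ℝ) (x : E2) : ℝ := pd2 u x 0 0 + pd2 u x 1 1

/-- The largest eigenvalue of a symmetric 2×2 real matrix. -/
noncomputable def lambdaMax (M : Matrix (Fin 2) (Fin 2) ℝ) : ℝ :=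
  ((M 0 0 + M 1 1) + Real.sqrt ((M 0 0 - M 1 1) ^ 2 + (M 0 1 + M 1 0) ^ 2)) / 2

/-- `u` is the torsion function of `U`: continuous up to the boundary, `C²` inside,
`Δu = -1` in `U` and `u = 0` on `∂U`. -/
def IsTorsion (U : Set E2) (u : E2 → ℝ) : Prop :=
  ContinuousOn u (closure U) ∧ (∀ x ∈ U, ContDiffAt ℝ 2 u x) ∧
    (∀ x ∈ U, lap u x = -1) ∧ (∀ x ∈ frontier U, u x = 0)

local notation "𝐞" => EuclideanSpace.single (𝕜 := ℝ) (ι := Fin 2)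

lemma pd2_eq_of_hasFDerivAt {f : E2 → ℝ} {F : E2 → E2 →L[ℝ] ℝ} {G : E2 →L[ℝ] ℝ} {x : E2}
    {i j : Fin 2} (hf : ∀ᶠ y in 𝓝 x, HasFDerivAt f (F y) y)
    (hF : HasFDerivAt (fun y => F y (𝐞 j 1)) G x) :
    pd2 f x i j = G (𝐞 i 1) := by
  have hfF : (fun y => fderiv ℝ f y (𝐞 j 1)) =ᶠ[𝓝 x] fun y => F y (𝐞 j 1) := by
    filter_upwards [hf] with y hy
    rw [hy.fderiv]
  rw [pd2, hfF.fderiv_eq, hF.fderiv]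

section

variable {E F : Type*} [NormedAddCommGroup E] [NormedSpace ℝ E] [NormedAddCommGroup F]
  [NormedSpace ℝ F]

lemma differentiableAt_fderiv_apply {f : E → F} {x : E} (hf : ContDiffAt ℝ 2 f x) (v : E) :
    DifferentiableAt ℝ (fun y => fderiv ℝ f y v) x :=
  ((hf.fderiv_right (m := 1) (by norm_num)).differentiableAt (by norm_num)).clm_apply
    (differentiableAt_const v)

lemma eventually_hasFDerivAt_fderiv {f : E → F} {x : E} (hf : ContDiffAt ℝ 2 f x) :
    ∀ᶠ y in 𝓝 x, HasFDerivAt f (fderiv ℝ f y) y := by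
  filter_upwards [hf.eventually (by norm_num)] with y hy
  exact (hy.differentiableAt (by norm_num)).hasFDerivAt

end

lemma lap_add {f g : E2 → ℝ} {x : E2} (hf : ContDiffAt ℝ 2 f x) (hg : ContDiffAt ℝ 2 g x) :
    lap (fun y => f y + g y) x = lap f x + lap g x := by
  have hpd2 (i : Fin 2) : pd2 (fun y => f y + g y) x i i = pd2 f x i i + pd2 g x i i :=
    pd2_eq_of_hasFDerivAt
      ((eventually_hasFDerivAt_fderiv hf).and (eventually_hasFDerivAt_fderiv hg) |>.mono
        fun _ h => h.1.add h.2)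
      ((differentiableAt_fderiv_apply hf _).hasFDerivAt.add
        (differentiableAt_fderiv_apply hg _).hasFDerivAt)
  simp only [lap, hpd2]
  ring

lemma lap_const_mul (c : ℝ) {f : E2 → ℝ} {x : E2} (hf : ContDiffAt ℝ 2 f x) :
    lap (fun y => c * f y) x = c * lap f x := by
  have hpd2 (i : Fin 2) : pd2 (fun y => c * f y) x i i = c * pd2 f x i i :=
    pd2_eq_of_hasFDerivAt (F := fun y => c • fderiv ℝ f y)
      ((eventually_hasFDerivAt_fderiv hf).mono fun _ h => h.const_mul c)
      ((differentiableAt_fderiv_apply hf _).hasFDerivAt.const_mul c)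
  simp only [lap, hpd2]
  ring

lemma lap_neg {f : E2 → ℝ} {x : E2} (hf : ContDiffAt ℝ 2 f x) :
    lap (fun y => -f y) x = -lap f x := by
  simpa using lap_const_mul (-1) hf

lemma lap_sub {f g : E2 → ℝ} {x : E2} (hf : ContDiffAt ℝ 2 f x) (hg : ContDiffAt ℝ 2 g x) :
    lap (fun y => f y - g y) x = lap f x - lap g x := by
  simpa [sub_eq_add_neg, lap_neg hg] using lap_add hf hg.neg

lemma lap_eq_of_hasFDerivAt_innerSL {f : E2 → ℝ} {g : E2 → E2} {G : E2 →L[ℝ] E2} {x : E2}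
    (hf : ∀ᶠ y in 𝓝 x, HasFDerivAt f (innerSL ℝ (g y)) y) (hg : HasFDerivAt g G x) :
    lap f x = G (𝐞 0 1) 0 + G (𝐞 1 1) 1 := by
  have hpd2 (i : Fin 2) : pd2 f x i i = G (𝐞 i 1) i := by
    refine pd2_eq_of_hasFDerivAt (G := (EuclideanSpace.proj i).comp G) hf ?_
    have hcoord : (fun y => innerSL ℝ (g y) (𝐞 i 1)) = fun y => g y i := by
      ext y
      simp [EuclideanSpace.inner_single_right]
    rw [hcoord]
    exact (EuclideanSpace.proj i).hasFDerivAt.comp x hg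
  rw [lap, hpd2, hpd2]

lemma lap_norm_sq (x : E2) : lap (fun y => ‖y‖ ^ 2) x = 4 := by
  have hf : ∀ᶠ y in 𝓝 x, HasFDerivAt (fun y : E2 => ‖y‖ ^ 2) (innerSL ℝ ((2 : ℝ) • y)) y :=
    Eventually.of_forall fun y => (hasStrictFDerivAt_norm_sq y).hasFDerivAt.congr_fderiv (by
      ext v
      simp)
  rw [lap_eq_of_hasFDerivAt_innerSL hf ((2 : ℝ) • ContinuousLinearMap.id ℝ E2).hasFDerivAt]
  norm_num

lemma hasFDerivAt_log_norm_sub (c : E2) {y : E2} (hy : y ≠ c) :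
    HasFDerivAt (fun y => Real.log ‖y - c‖) (innerSL ℝ ((‖y - c‖ ^ 2)⁻¹ • (y - c))) y := by
  have hlog : (fun y => Real.log ‖y - c‖) = fun y => 2⁻¹ * Real.log (‖y - c‖ ^ 2) := by
    ext y
    rw [Real.log_pow]
    ring
  have hsq := ((hasFDerivAt_id y).sub_const c).norm_sq.log (by simpa [sub_eq_zero] using hy)
  rw [hlog]
  refine (hsq.const_mul 2⁻¹).congr_fderiv ?_
  ext v
  simp
  ring

lemma lap_log_norm_sub (c : E2) {x : E2} (hx : x ≠ c) :
    lap (fun y => Real.log ‖y - c‖) x = 0 := by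
  have hf : ∀ᶠ y in 𝓝 x, HasFDerivAt (fun y => Real.log ‖y - c‖)
      (innerSL ℝ ((‖y - c‖ ^ 2)⁻¹ • (y - c))) y := by
    filter_upwards [isOpen_ne.mem_nhds hx] with y hy
    exact hasFDerivAt_log_norm_sub c hy
  have hq : (‖x - c‖ ^ 2) ≠ 0 := by simpa [sub_eq_zero] using hx
  have hg := ((hasDerivAt_inv hq).comp_hasFDerivAt x
    ((hasFDerivAt_id x).sub_const c).norm_sq).smul ((hasFDerivAt_id x).sub_const c)
  have hnorm : ‖x - c‖ ^ 2 = (x 0 - c 0) ^ 2 + (x 1 - c 1) ^ 2 := by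
    simp [EuclideanSpace.norm_sq_eq, Fin.sum_univ_two]
  -- `Δ log ‖y - c‖ = (n - 2) / ‖y - c‖ ^ 2` in dimension `n`
  rw [lap_eq_of_hasFDerivAt_innerSL hf hg]
  simp [EuclideanSpace.inner_single_right]
  rw [hnorm] at hq ⊢
  field_simp
  ring

lemma contDiffAt_log_norm_sub (c : E2) {x : E2} (hx : x ≠ c) :
    ContDiffAt ℝ 2 (fun y => Real.log ‖y - c‖) x :=
  ((contDiffAt_id.sub contDiffAt_const).norm ℝ (sub_ne_zero.2 hx)).log
    (by simpa [sub_eq_zero] using hx)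

lemma pd2_self_nonpos_of_isLocalMax {v : E2 → ℝ} {z : E2} (hv : ContDiffAt ℝ 2 v z)
    (hz : IsLocalMax v z) (i : Fin 2) : pd2 v z i i ≤ 0 := by
  set line : ℝ → E2 := fun t => z + t • 𝐞 i 1
  have hline (t : ℝ) : HasDerivAt line (𝐞 i 1) t := by
    simpa [line] using ((hasDerivAt_id t).smul_const (𝐞 i 1)).const_add z
  have hline0 : line 0 = z := by simp [line]
  set g : ℝ → ℝ := v ∘ line
  have hg' : deriv g =ᶠ[𝓝 0] fun t => fderiv ℝ v (line t) (𝐞 i 1) := by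
    have hline_tendsto : Tendsto line (𝓝 0) (𝓝 z) := hline0 ▸ (hline 0).continuousAt
    filter_upwards [hline_tendsto.eventually (eventually_hasFDerivAt_fderiv hv)] with t ht
    exact (ht.comp_hasDerivAt t (hline t)).deriv
  have hg'' : deriv (deriv g) 0 = pd2 v z i i := by
    rw [hg'.deriv_eq]
    exact ((differentiableAt_fderiv_apply hv _).hasFDerivAt.comp_hasDerivAt_of_eq 0 (hline 0)
      hline0.symm).deriv
  have hgmax : IsLocalMax g 0 := (hline0 ▸ hz).comp_continuous (hline 0).continuousAt
  -- if `g'' 0 > 0`, then `0` is also a local minimum of `g`, so `g` is locally constant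
  by_contra! hpos
  have hgmin : IsLocalMin g 0 :=
    isLocalMin_of_deriv_deriv_pos (hg'' ▸ hpos) hgmax.deriv_eq_zero
      (hv.continuousAt.comp_of_eq (hline 0).continuousAt hline0)
  have hconst : g =ᶠ[𝓝 0] fun _ => g 0 := (hgmin.and hgmax).mono fun _ h => le_antisymm h.2 h.1
  have : deriv (deriv g) 0 = 0 := by simp [hconst.deriv.deriv_eq]
  linarith

lemma lap_nonpos_of_isLocalMax {v : E2 → ℝ} {z : E2} (hv : ContDiffAt ℝ 2 v z)
    (hz : IsLocalMax v z) : lap v z ≤ 0 :=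
  add_nonpos (pd2_self_nonpos_of_isLocalMax hv hz 0) (pd2_self_nonpos_of_isLocalMax hv hz 1)

lemma le_of_forall_mem_frontier_le_of_lap_pos {U : Set E2} (hUo : IsOpen U)
    (hUb : Bornology.IsBounded U) {v : E2 → ℝ} (hc : ContinuousOn v (closure U))
    (hd : ∀ x ∈ U, ContDiffAt ℝ 2 v x) (hlap : ∀ x ∈ U, 0 < lap v x) {m : ℝ}
    (hm : ∀ x ∈ frontier U, v x ≤ m) : ∀ x ∈ closure U, v x ≤ m := by
  intro x hx
  obtain ⟨z, hzU, hzmax⟩ := hUb.isCompact_closure.exists_isMaxOn ⟨x, hx⟩ hc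
  have hz : z ∈ frontier U := by
    rw [hUo.frontier_eq]
    refine ⟨hzU, fun hz => ?_⟩
    have hzloc : IsLocalMax v z :=
      hzmax.isLocalMax (mem_of_superset (hUo.mem_nhds hz) subset_closure)
    exact (hlap z hz).not_ge (lap_nonpos_of_isLocalMax (hd z hz) hzloc)
  exact (hzmax hx).trans (hm z hz)

lemma le_of_forall_mem_frontier_le_of_lap_nonneg {U : Set E2} (hUo : IsOpen U)
    (hUb : Bornology.IsBounded U) {v : E2 → ℝ} (hc : ContinuousOn v (closure U))
    (hd : ∀ x ∈ U, ContDiffAt ℝ 2 v x) (hlap : ∀ x ∈ U, 0 ≤ lap v x) {m : ℝ}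
    (hm : ∀ x ∈ frontier U, v x ≤ m) : ∀ x ∈ closure U, v x ≤ m := by
  obtain ⟨r, hr, hUr⟩ := hUb.closure.exists_pos_norm_le
  intro x hx
  -- perturb `v` by `t ‖y‖ ^ 2`, whose Laplacian `4 t` is positive, and let `t → 0`
  refine le_of_forall_pos_le_add fun η hη => ?_
  set t := η / r ^ 2
  have ht : 0 < t := by positivity
  have hsq : ContDiff ℝ 2 (fun y : E2 => ‖y‖ ^ 2) := contDiff_norm_sq ℝ
  have hsq_le {y : E2} (hy : y ∈ closure U) : ‖y‖ ^ 2 ≤ r ^ 2 :=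
    pow_le_pow_left₀ (norm_nonneg y) (hUr y hy) 2
  have hperturbed := le_of_forall_mem_frontier_le_of_lap_pos hUo hUb
    (v := fun y => v y + t * ‖y‖ ^ 2) (m := m + t * r ^ 2)
    (hc.add (continuous_const.mul hsq.continuous).continuousOn)
    (fun y hy => (hd y hy).add (contDiffAt_const.mul hsq.contDiffAt))
    (fun y hy => by
      rw [lap_add (hd y hy) (contDiffAt_const.mul hsq.contDiffAt), lap_const_mul t hsq.contDiffAt,
        lap_norm_sq]
      linarith [hlap y hy])
    (fun y hy => add_le_add (hm y hy)
      (mul_le_mul_of_nonneg_left (hsq_le (frontier_subset_closure hy)) ht.le)) x hx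
  have htr : t * r ^ 2 = η := div_mul_cancel₀ η (by positivity)
  nlinarith [sq_nonneg ‖x‖]

lemma abs_le_of_forall_mem_frontier_abs_le_of_lap_eq_zero {U : Set E2} (hUo : IsOpen U)
    (hUb : Bornology.IsBounded U) {w : E2 → ℝ}
    (hc : ContinuousOn w (closure U)) (hd : ∀ x ∈ U, ContDiffAt ℝ 2 w x)
    (hlap : ∀ x ∈ U, lap w x = 0) {m : ℝ} (hm : ∀ x ∈ frontier U, |w x| ≤ m) :
    ∀ x ∈ closure U, |w x| ≤ m := by
  intro x hx
  refine abs_le.2 ⟨neg_le.1 ?_, ?_⟩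
  · refine le_of_forall_mem_frontier_le_of_lap_nonneg hUo hUb (v := fun y => -w y) hc.neg
      (fun y hy => (hd y hy).neg) (fun y hy => by rw [lap_neg (hd y hy), hlap y hy, neg_zero])
      (fun y hy => neg_le.1 (abs_le.1 (hm y hy)).1) x hx
  · exact le_of_forall_mem_frontier_le_of_lap_nonneg hUo hUb hc hd
      (fun y hy => (hlap y hy).ge) (fun y hy => (abs_le.1 (hm y hy)).2) x hx

lemma lap_sub_add_mul_log_norm_sub {u v : E2 → ℝ} {z c : E2} (hu : ContDiffAt ℝ 2 u z)
    (hv : ContDiffAt ℝ 2 v z) (hz : z ≠ c) (a : ℝ) :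
    lap (fun y => u y - v y + a * Real.log ‖y - c‖) z = lap u z - lap v z := by
  rw [lap_add (hu.sub hv) (contDiffAt_const.mul (contDiffAt_log_norm_sub c hz)), lap_sub hu hv,
    lap_const_mul a (contDiffAt_log_norm_sub c hz), lap_log_norm_sub c hz, mul_zero, add_zero]

lemma continuousOn_log_norm_sub {c : E2} {s : Set E2} (hs : ∀ y ∈ s, y ≠ c) :
    ContinuousOn (fun y => Real.log ‖y - c‖) s :=
  (continuousOn_id.sub continuousOn_const).norm.log fun y hy => by
    simpa [sub_eq_zero] using hs y hy

lemma frontier_sdiff_subset {X : Type*} [TopologicalSpace X] (s t : Set X) :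
    frontier (s \ t) ⊆ frontier s ∪ frontier t := by
  rw [sdiff_eq, ← frontier_compl t]
  exact (frontier_inter_subset s tᶜ).trans (union_subset_union inter_subset_left inter_subset_right)

lemma closure_sdiff_closedBall_subset {X : Type*} [PseudoMetricSpace X] (s : Set X) (c : X)
    (r : ℝ) : closure (s \ closedBall c r) ⊆ closure s \ ball c r :=
  subset_inter (closure_mono sdiff_subset) <|
    closure_minimal (fun _ hy hb => hy.2 (ball_subset_closedBall hb)) isOpen_ball.isClosed_compl

lemma ne_of_mem_closure_sdiff_closedBall {X : Type*} [PseudoMetricSpace X] {s : Set X} {c : X}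
    {r : ℝ} (hr : 0 < r) {y : X} (hy : y ∈ closure (s \ closedBall c r)) : y ≠ c := by
  rintro rfl
  exact (closure_sdiff_closedBall_subset s y r hy).2 (mem_ball_self hr)

lemma sphere_subset_frontier_sdiff_closedBall {E : Type*} [NormedAddCommGroup E]
    [NormedSpace ℝ E] {s : Set E} (hs : IsOpen s) {c : E} {r : ℝ}
    (hr : r ≠ 0) (hsph : sphere c r ⊆ s) : sphere c r ⊆ frontier (s \ closedBall c r) := by
  intro y hy
  rw [(hs.sdiff isClosed_closedBall).frontier_eq]
  refine ⟨?_, fun h => h.2 (sphere_subset_closedBall hy)⟩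
  rw [sdiff_eq]
  refine hs.inter_closure ⟨hsph hy, ?_⟩
  rw [closure_compl, interior_closedBall c hr, mem_compl_iff, mem_ball, mem_sphere.1 hy]
  exact lt_irrefl r

namespace IsTorsion

variable {U V Ω : Set E2} {u v u₀ uε : E2 → ℝ} {x₀ : E2} {ε : ℝ}

lemma nonneg (hUo : IsOpen U) (hUb : Bornology.IsBounded U) (hu : IsTorsion U u) :
    ∀ x ∈ closure U, 0 ≤ u x := by
  obtain ⟨hc, hd, hlap, hfr⟩ := hu
  intro x hx
  have hneg := le_of_forall_mem_frontier_le_of_lap_nonneg hUo hUb (v := fun y => -u y) hc.neg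
    (fun y hy => (hd y hy).neg) (fun y hy => by rw [lap_neg (hd y hy), hlap y hy]; norm_num)
    (m := 0) (fun y hy => by simp [hfr y hy]) x hx
  linarith

lemma le_of_subset (hUo : IsOpen U) (hVo : IsOpen V) (hVb : Bornology.IsBounded V) (hUV : U ⊆ V)
    (hu : IsTorsion U u) (hv : IsTorsion V v) : ∀ x ∈ closure U, u x ≤ v x := by
  have hcl : closure U ⊆ closure V := closure_mono hUV
  intro x hx
  have hdiff := le_of_forall_mem_frontier_le_of_lap_nonneg hUo (hVb.subset hUV)
    (v := fun y => u y - v y) (hu.1.sub (hv.1.mono hcl))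
    (fun y hy => (hu.2.1 y hy).sub (hv.2.1 y (hUV hy)))
    (fun y hy => by
      rw [lap_sub (hu.2.1 y hy) (hv.2.1 y (hUV hy)), hu.2.2.1 y hy, hv.2.2.1 y (hUV hy), sub_self])
    (m := 0) (fun y hy => by
      rw [hu.2.2.2 y hy, zero_sub, neg_nonpos]
      exact hv.nonneg hVo hVb y (hcl (frontier_subset_closure hy))) x hx
  linarith

/-- The barrier `M / -log ε * (log R - log ‖y - x₀‖)` is harmonic off `x₀`, equals `M` on the
hole and is nonnegative on `closure Ω ⊆ closedBall x₀ R`. -/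
lemma sub_le_of_sdiff_closedBall {R M : ℝ} (hΩo : IsOpen Ω) (hΩb : Bornology.IsBounded Ω)
    (h₀ : IsTorsion Ω u₀) (hε : IsTorsion (Ω \ closedBall x₀ ε) uε) (hε0 : 0 < ε) (hε1 : ε < 1)
    (hR : 1 ≤ R) (hΩR : Ω ⊆ closedBall x₀ R) (hM : ∀ y ∈ closure Ω, u₀ y ≤ M) :
    ∀ y ∈ closure (Ω \ closedBall x₀ ε),
      u₀ y - uε y ≤ M / -Real.log ε * (Real.log R - Real.log ‖y - x₀‖) := by
  have hcl : closure (Ω \ closedBall x₀ ε) ⊆ closure Ω := closure_mono sdiff_subset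
  have hne : ∀ y ∈ closure (Ω \ closedBall x₀ ε), y ≠ x₀ := fun _ =>
    ne_of_mem_closure_sdiff_closedBall hε0
  have hlogε : 0 < -Real.log ε := neg_pos.2 (Real.log_neg hε0 hε1)
  set a := M / -Real.log ε
  intro y hy
  have hbarrier := le_of_forall_mem_frontier_le_of_lap_nonneg (hΩo.sdiff isClosed_closedBall)
    (hΩb.subset sdiff_subset) (v := fun y => u₀ y - uε y + a * Real.log ‖y - x₀‖)
    (m := a * Real.log R)
    (((h₀.1.mono hcl).sub hε.1).add (continuousOn_const.mul (continuousOn_log_norm_sub hne)))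
    (fun z hz => ((h₀.2.1 z hz.1).sub (hε.2.1 z hz)).add
      (contDiffAt_const.mul (contDiffAt_log_norm_sub x₀ (hne z (subset_closure hz)))))
    (fun z hz => by
      rw [lap_sub_add_mul_log_norm_sub (h₀.2.1 z hz.1) (hε.2.1 z hz) (hne z (subset_closure hz)),
        h₀.2.2.1 z hz.1, hε.2.2.1 z hz, sub_self])
    (fun z hz => by
      have hzcl := frontier_subset_closure hz
      have ha0 : 0 ≤ a :=
        div_nonneg ((h₀.nonneg hΩo hΩb z (hcl hzcl)).trans (hM z (hcl hzcl))) hlogε.le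
      rw [hε.2.2.2 z hz, sub_zero]
      rcases frontier_sdiff_subset Ω _ hz with hzΩ | hzε
      · rw [h₀.2.2.2 z hzΩ, zero_add]
        refine mul_le_mul_of_nonneg_left (Real.log_le_log ?_ ?_) ha0
        · exact norm_pos_iff.2 (sub_ne_zero.2 (hne z hzcl))
        · simpa [dist_eq_norm] using closure_minimal hΩR isClosed_closedBall (hcl hzcl)
      · rw [← dist_eq_norm, frontier_closedBall_subset_sphere hzε]
        have ha : a * Real.log ε = -M := by
          rw [div_mul_eq_mul_div, div_neg, mul_div_assoc, div_self (neg_ne_zero.1 hlogε.ne'),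
            mul_one]
        linarith [hM z (hcl hzcl), mul_nonneg ha0 (Real.log_nonneg hR)])
    y hy
  linarith

lemma abs_sub_add_mul_log_le_of_mem_annulus {σ a δ : ℝ} (hΩo : IsOpen Ω) (h₀ : IsTorsion Ω u₀)
    (hε : IsTorsion (Ω \ closedBall x₀ ε) uε) (hε0 : 0 < ε) (hεσ : ε < σ)
    (hσΩ : ball x₀ σ ⊆ Ω) (hin : ∀ y ∈ sphere x₀ ε, |a * Real.log ε - u₀ y| ≤ δ)
    (hout : ∀ y ∈ sphere x₀ σ, |uε y - u₀ y + a * Real.log σ| ≤ δ) :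
    ∀ x ∈ ball x₀ σ \ closedBall x₀ ε, |uε x - u₀ x + a * Real.log ‖x - x₀‖| ≤ δ := by
  have hAU : ball x₀ σ \ closedBall x₀ ε ⊆ Ω \ closedBall x₀ ε := sdiff_subset_sdiff_left hσΩ
  have hcl := closure_mono hAU
  have hne : ∀ y ∈ closure (ball x₀ σ \ closedBall x₀ ε), y ≠ x₀ := fun _ =>
    ne_of_mem_closure_sdiff_closedBall hε0
  have hsph : sphere x₀ ε ⊆ frontier (Ω \ closedBall x₀ ε) :=
    sphere_subset_frontier_sdiff_closedBall hΩo hε0.ne' fun y hy =>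
      hσΩ (by rwa [mem_ball, mem_sphere.1 hy])
  intro x hx
  refine abs_le_of_forall_mem_frontier_abs_le_of_lap_eq_zero
    (isOpen_ball.sdiff isClosed_closedBall) (isBounded_ball.subset sdiff_subset)
    (w := fun y => uε y - u₀ y + a * Real.log ‖y - x₀‖)
    (((hε.1.mono hcl).sub (h₀.1.mono (hcl.trans (closure_mono sdiff_subset)))).add
      (continuousOn_const.mul (continuousOn_log_norm_sub hne)))
    (fun z hz => ((hε.2.1 z (hAU hz)).sub (h₀.2.1 z (hAU hz).1)).add
      (contDiffAt_const.mul (contDiffAt_log_norm_sub x₀ (hne z (subset_closure hz)))))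
    (fun z hz => by
      rw [lap_sub_add_mul_log_norm_sub (hε.2.1 z (hAU hz)) (h₀.2.1 z (hAU hz).1)
        (hne z (subset_closure hz)), hε.2.2.1 z (hAU hz), h₀.2.2.1 z (hAU hz).1, sub_self])
    (fun y hy => ?_) x (subset_closure hx)
  rcases frontier_sdiff_subset _ _ hy with hyσ | hyε
  · have hyσ' := frontier_ball_subset_sphere hyσ
    rw [← dist_eq_norm, mem_sphere.1 hyσ']
    exact hout y hyσ'
  · have hyε' := frontier_closedBall_subset_sphere hyε
    rw [hε.2.2.2 y (hsph hyε'), ← dist_eq_norm, mem_sphere.1 hyε', zero_sub, neg_add_eq_sub]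
    exact hin y hyε'

lemma abs_sub_add_mul_log_le_of_mem_sphere {R M σ : ℝ} (hΩo : IsOpen Ω)
    (hΩb : Bornology.IsBounded Ω) (h₀ : IsTorsion Ω u₀) (hε : IsTorsion (Ω \ closedBall x₀ ε) uε)
    (hε0 : 0 < ε) (hεσ : ε < σ) (hσ1 : σ < 1) (hσΩ : closedBall x₀ σ ⊆ Ω) (hR : 1 ≤ R)
    (hΩR : Ω ⊆ closedBall x₀ R) (hM : ∀ y ∈ closure Ω, u₀ y ≤ M) :
    ∀ y ∈ sphere x₀ σ, |uε y - u₀ y + -(u₀ x₀ / |Real.log ε|) * Real.log σ|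
      ≤ M * (Real.log R - Real.log σ) / |Real.log ε| := by
  intro y hy
  have hyU : y ∈ closure (Ω \ closedBall x₀ ε) := subset_closure
    ⟨hσΩ (sphere_subset_closedBall hy), by simpa [mem_sphere.1 hy] using hεσ⟩
  have hL : 0 < |Real.log ε| := abs_pos.2 (Real.log_neg hε0 (hεσ.trans hσ1)).ne
  have hlower := hε.le_of_subset (hΩo.sdiff isClosed_closedBall) hΩo hΩb sdiff_subset h₀ y hyU
  have hupper := sub_le_of_sdiff_closedBall hΩo hΩb h₀ hε hε0 (hεσ.trans hσ1) hR hΩR hM y hyU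
  rw [← dist_eq_norm, mem_sphere.1 hy, ← abs_of_neg (Real.log_neg hε0 (hεσ.trans hσ1)),
    div_mul_eq_mul_div] at hupper
  have hx₀ := hσΩ (mem_closedBall_self (hεσ.trans' hε0).le)
  have hu₀x₀ := h₀.nonneg hΩo hΩb x₀ (subset_closure hx₀)
  have hlogσ := Real.log_neg (hεσ.trans' hε0) hσ1
  have hterm : -(u₀ x₀ / |Real.log ε|) * Real.log σ
      ≤ M * (Real.log R - Real.log σ) / |Real.log ε| := by
    rw [neg_mul_comm, div_mul_eq_mul_div, div_le_div_iff_of_pos_right hL]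
    exact mul_le_mul (hM x₀ (subset_closure hx₀)) (by linarith [Real.log_nonneg hR])
      (by linarith) (hu₀x₀.trans (hM x₀ (subset_closure hx₀)))
  have hterm0 : 0 ≤ -(u₀ x₀ / |Real.log ε|) * Real.log σ :=
    mul_nonneg_of_nonpos_of_nonpos (neg_nonpos.2 (div_nonneg hu₀x₀ hL.le)) hlogσ.le
  rw [abs_le]
  constructor <;> linarith

lemma abs_sub_sub_log_div_mul_le {R M σ δ : ℝ} (hΩo : IsOpen Ω) (hΩb : Bornology.IsBounded Ω)
    (h₀ : IsTorsion Ω u₀) (hε : IsTorsion (Ω \ closedBall x₀ ε) uε) (hε0 : 0 < ε) (hεσ : ε < σ)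
    (hσ1 : σ < 1) (hσΩ : closedBall x₀ σ ⊆ Ω) (hR : 1 ≤ R) (hΩR : Ω ⊆ closedBall x₀ R)
    (hM : ∀ y ∈ closure Ω, u₀ y ≤ M) (hcont : ∀ y ∈ sphere x₀ ε, dist (u₀ y) (u₀ x₀) ≤ δ)
    (hsmall : M * (Real.log R - Real.log σ) / |Real.log ε| ≤ δ) :
    ∀ x ∈ ball x₀ σ \ closedBall x₀ ε,
      |uε x - u₀ x - (Real.log ‖x - x₀‖ / |Real.log ε|) * u₀ x₀| ≤ δ := by
  intro x hx
  have hlogε := Real.log_neg hε0 (hεσ.trans hσ1)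
  have hin (y) (hy : y ∈ sphere x₀ ε) : |-(u₀ x₀ / |Real.log ε|) * Real.log ε - u₀ y| ≤ δ := by
    rw [abs_of_neg hlogε, div_neg, neg_neg, div_mul_cancel₀ _ hlogε.ne, abs_sub_comm,
      ← Real.dist_eq]
    exact hcont y hy
  have hout (y) (hy : y ∈ sphere x₀ σ) := (h₀.abs_sub_add_mul_log_le_of_mem_sphere hΩo hΩb hε hε0
    hεσ hσ1 hσΩ hR hΩR hM y hy).trans hsmall
  convert h₀.abs_sub_add_mul_log_le_of_mem_annulus hΩo hε hε0 hεσ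
    (ball_subset_closedBall.trans hσΩ) hin hout x hx using 2
  ring

end IsTorsion

theorem uEps_expansion_near_hole_general
    (Ω : Set E2) (hΩo : IsOpen Ω) (hΩb : Bornology.IsBounded Ω)
    (u₀ : E2 → ℝ) (h₀ : IsTorsion Ω u₀)
    (x₀ : E2) (hx₀ : x₀ ∈ Ω)
    (ε₁ : ℝ) (hε₁ : 0 < ε₁) (hball : closedBall x₀ ε₁ ⊆ Ω)
    (uε : ℝ → E2 → ℝ)
    (huε : ∀ ε ∈ Ioo (0:ℝ) ε₁, IsTorsion (Ω \ closedBall x₀ ε) (uε ε)) :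
    ∀ δ > 0, ∃ ρ > 0, ∃ ε₀ > 0, ε₀ ≤ ε₁ ∧ ∀ ε ∈ Ioo (0:ℝ) ε₀,
      ∀ x ∈ Ω \ closedBall x₀ ε, ‖x - x₀‖ ≤ ρ →
        |uε ε x - u₀ x - (Real.log ‖x - x₀‖ / |Real.log ε|) * u₀ x₀|
          ≤ δ * (|Real.log ‖x - x₀‖| / |Real.log ε| + 1) := by
  intro δ hδ
  obtain ⟨M, hM⟩ := (hΩb.isCompact_closure.image_of_continuousOn h₀.1).bddAbove
  rw [mem_upperBounds, forall_mem_image] at hM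
  obtain ⟨R, hΩR⟩ := hΩb.subset_closedBall x₀
  replace hΩR := hΩR.trans (closedBall_subset_closedBall (le_max_left R 1))
  obtain ⟨r, hr, hu₀r⟩ := Metric.nhds_basis_closedBall.eventually_iff.1 <|
    (h₀.1.continuousAt (mem_of_superset (hΩo.mem_nhds hx₀) subset_closure)).eventually
      (closedBall_mem_nhds (u₀ x₀) hδ)
  set σ := min ε₁ 1 / 2
  have hσ0 : 0 < σ := half_pos (lt_min hε₁ one_pos)
  have hσ : σ < min ε₁ 1 := half_lt_self (lt_min hε₁ one_pos)
  have hsmall : Tendsto (fun ε => M * (Real.log (max R 1) - Real.log σ) / |Real.log ε|)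
      (𝓝[>] 0) (𝓝 0) :=
    tendsto_const_nhds.div_atTop (tendsto_abs_atBot_atTop.comp Real.tendsto_log_nhdsGT_zero)
  obtain ⟨ε₀, hε₀, hε₀small⟩ :=
    (nhdsGT_basis 0).eventually_iff.1 (hsmall.eventually (eventually_le_nhds hδ))
  refine ⟨σ / 2, by positivity, min ε₀ (min σ r), lt_min hε₀ (lt_min hσ0 hr),
    (min_le_right _ _).trans ((min_le_left _ _).trans (hσ.le.trans (min_le_left _ _))),
    fun ε ⟨hε0, hεlt⟩ x hx hxρ => ?_⟩
  simp only [lt_min_iff] at hεlt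
  have hσε₁ : σ < ε₁ := hσ.trans_le (min_le_left _ _)
  have hσΩ : closedBall x₀ σ ⊆ Ω := (closedBall_subset_closedBall hσε₁.le).trans hball
  have hcont (y) (hy : y ∈ sphere x₀ ε) : dist (u₀ y) (u₀ x₀) ≤ δ :=
    hu₀r (closedBall_subset_closedBall hεlt.2.2.le (sphere_subset_closedBall hy))
  have hxA : x ∈ ball x₀ σ \ closedBall x₀ ε := ⟨by rw [mem_ball, dist_eq_norm]; linarith, hx.2⟩
  calc _ ≤ δ := h₀.abs_sub_sub_log_div_mul_le hΩo hΩb (huε ε ⟨hε0, hεlt.2.1.trans hσε₁⟩) hε0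
        hεlt.2.1 (hσ.trans_le (min_le_right _ _)) hσΩ (le_max_right R 1) hΩR hM hcont
        (hε₀small ⟨hε0, hεlt.1⟩) x hxA
    _ ≤ _ := le_mul_of_one_le_right hδ.le (le_add_of_nonneg_left (by positivity))

/-- Near the hole, `u_ε(x) = u₀(x) + (log|x-x₀|/|log ε|)(u₀(x₀) + o(1)) + o(1)`. -/
theorem uEps_expansion_near_hole
    (Ω : Set E2) (hΩo : IsOpen Ω) (hΩb : Bornology.IsBounded Ω) (hΩc : Convex ℝ Ω)
    (u₀ : E2 → ℝ) (h₀ : IsTorsion Ω u₀)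
    (x₀ : E2) (hx₀ : x₀ ∈ Ω)
    (ε₁ : ℝ) (hε₁ : 0 < ε₁) (hball : closedBall x₀ ε₁ ⊆ Ω)
    (uε : ℝ → E2 → ℝ)
    (huε : ∀ ε ∈ Ioo (0:ℝ) ε₁, IsTorsion (Ω \ closedBall x₀ ε) (uε ε)) :
    ∀ δ > 0, ∃ ρ > 0, ∃ ε₀ > 0, ε₀ ≤ ε₁ ∧ ∀ ε ∈ Ioo (0:ℝ) ε₀,
      ∀ x ∈ Ω \ closedBall x₀ ε, ‖x - x₀‖ ≤ ρ →
        |uε ε x - u₀ x - (Real.log ‖x - x₀‖ / |Real.log ε|) * u₀ x₀|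
          ≤ δ * (|Real.log ‖x - x₀‖| / |Real.log ε| + 1) :=
  uEps_expansion_near_hole_general Ω hΩo hΩb u₀ h₀ x₀ hx₀ ε₁ hε₁ hball uε huε
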